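/- arXiv:1108.1982 — 6 statements merged into one kernel-verified Lean document; each statement's English description precedes it below -/
import Mathlib

section
/- Let φ be a C² function on a domain Ω ⊂ R², x ∈ Ω with Dφ(x) ≠ 0. Then φ(x) - med_{s ∈ ∂B_ε(x)} φ(s) = -(ε²/2)Δ_1φ(x) + o(ε²) as ε → 0, where Δ_1φ = |Dφ| div(Dφ/|Dφ|) is the 1-Laplacian. -/
/-!
By Taylor's formula, uniformly in `θ`, with `e_θ = (cos θ, sin θ)`,
`φ (x + ε e_θ) = φ x + ε ℓ θ + ε² / 2 · Q θ + o(ε²)` where `ℓ θ = Dφ(x) e_θ = a cos θ + b sin θ`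
and `Q θ = D²φ(x)(e_θ, e_θ)`. The value of `Q` at the unit tangent `(-b, a) / |Dφ(x)|` is
`Δ₁φ(x)`, and `Q θ - Δ₁φ(x) = O(|ℓ θ|)`. Hence, for a fixed `η > 0` and small `ε`,
`φ (x + ε e_θ)` exceeds `φ x + ε² / 2 · Δ₁φ(x) + η ε²` only where `ℓ θ ≥ η ε / 4`, and falls
below `φ x + ε² / 2 · Δ₁φ(x) - η ε²` only where `ℓ θ ≤ -η ε / 4`. Each of these is an arc
shorter than half the circle, whereas each side of a median occupies at least half of it.
-/

open MeasureTheory Real Filter Asymptotics Metric Set Topology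

/-- Partial derivative ∂u/∂x_i. -/
noncomputable def pd {N : ℕ} (u : EuclideanSpace ℝ (Fin N) → ℝ) (i : Fin N)
    (x : EuclideanSpace ℝ (Fin N)) : ℝ :=
  fderiv ℝ u x (EuclideanSpace.single i 1)

/-- Second partial derivative ∂²u/∂x_i∂x_j. -/
noncomputable def pd2 {N : ℕ} (u : EuclideanSpace ℝ (Fin N) → ℝ) (i j : Fin N)
    (x : EuclideanSpace ℝ (Fin N)) : ℝ :=
  pd (pd u j) i x

/-- The norm of the gradient |Du(x)|. -/
noncomputable def gradNorm {N : ℕ} (u : EuclideanSpace ℝ (Fin N) → ℝ)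
    (x : EuclideanSpace ℝ (Fin N)) : ℝ :=
  Real.sqrt (∑ i, (pd u i x) ^ 2)

/-- The Laplacian Δu. -/
noncomputable def lap {N : ℕ} (u : EuclideanSpace ℝ (Fin N) → ℝ)
    (x : EuclideanSpace ℝ (Fin N)) : ℝ :=
  ∑ i, pd2 u i i x

/-- The infinity-Laplacian Δ_∞ u = |Du|⁻² Σ ∂_i u ∂_j u ∂_ij u. -/
noncomputable def infLap {N : ℕ} (u : EuclideanSpace ℝ (Fin N) → ℝ)
    (x : EuclideanSpace ℝ (Fin N)) : ℝ :=
  (∑ i, ∑ j, pd u i x * pd u j x * pd2 u i j x) / (gradNorm u x) ^ 2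

/-- The p-Laplacian Δ_p u = div(|Du|^{p-2} Du). -/
noncomputable def pLap {N : ℕ} (p : ℝ) (u : EuclideanSpace ℝ (Fin N) → ℝ)
    (x : EuclideanSpace ℝ (Fin N)) : ℝ :=
  ∑ i, pd (fun y => gradNorm u y ^ (p - 2) * pd u i y) i x

/-- The 1-Laplacian Δ_1 u = |Du| div(Du/|Du|). -/
noncomputable def oneLap {N : ℕ} (u : EuclideanSpace ℝ (Fin N) → ℝ)
    (x : EuclideanSpace ℝ (Fin N)) : ℝ :=
  gradNorm u x * ∑ i, pd (fun y => pd u i y / gradNorm u y) i x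

/-- The point x + ε(cos θ, sin θ) on the circle ∂B_ε(x). -/
noncomputable def circlePt (x : EuclideanSpace ℝ (Fin 2)) (ε θ : ℝ) :
    EuclideanSpace ℝ (Fin 2) :=
  x + ε • (EuclideanSpace.single 0 (Real.cos θ) + EuclideanSpace.single 1 (Real.sin θ))

/-- The average of u over the circle ∂B_ε(x). -/
noncomputable def circleAvg (u : EuclideanSpace ℝ (Fin 2) → ℝ)
    (x : EuclideanSpace ℝ (Fin 2)) (ε : ℝ) : ℝ :=
  (2 * Real.pi)⁻¹ * ∫ θ in (0:ℝ)..(2 * Real.pi), u (circlePt x ε θ)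

/-- m is a median of u over the circle ∂B_ε(x): the arc-length measures of the
sets where u ≥ m and u ≤ m coincide. -/
def IsCircleMedian (u : EuclideanSpace ℝ (Fin 2) → ℝ)
    (x : EuclideanSpace ℝ (Fin 2)) (ε m : ℝ) : Prop :=
  volume {θ ∈ Set.Ico (0:ℝ) (2 * Real.pi) | m ≤ u (circlePt x ε θ)} =
  volume {θ ∈ Set.Ico (0:ℝ) (2 * Real.pi) | u (circlePt x ε θ) ≤ m}

theorem isLittleO_sub_taylor_two {E F : Type*} [NormedAddCommGroup E] [NormedSpace ℝ E]
    [NormedAddCommGroup F] [NormedSpace ℝ F] {f : E → F} {f' : E → E →L[ℝ] F}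
    {f'' : E →L[ℝ] E →L[ℝ] F} {x : E} (hf : ∀ᶠ y in 𝓝 x, HasFDerivAt f (f' y) y)
    (hf' : HasFDerivAt f' f'' x) :
    (fun h => f (x + h) - f x - f' x h - (1 / 2 : ℝ) • f'' h h) =o[𝓝 0] fun h => ‖h‖ ^ 2 := by
  refine isLittleO_iff.2 fun η hη => ?_
  have hf0 : ∀ᶠ h in 𝓝 (0 : E), HasFDerivAt f (f' (x + h)) (x + h) :=
    (continuous_const.add continuous_id).tendsto' 0 x (add_zero x) |>.eventually hf
  have hlin := isLittleO_iff.1 (hasFDerivAt_iff_isLittleO_nhds_zero.1 hf') hη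
  obtain ⟨δ, hδ, hball⟩ := Metric.eventually_nhds_iff_ball.1 (hf0.and hlin)
  filter_upwards [ball_mem_nhds 0 hδ] with h hh
  have hseg : ∀ t ∈ Icc (0 : ℝ) 1, t • h ∈ ball (0 : E) δ := fun t ht => by
    rw [mem_ball_zero_iff, norm_smul, Real.norm_of_nonneg ht.1] at *
    exact (mul_le_of_le_one_left (norm_nonneg h) ht.2).trans_lt hh
  -- `k 1 - k 0` is the Taylor remainder, and `k'` is small by the differentiability of `f'` at `x`.
  set k : ℝ → F := fun t => f (x + t • h) - t • f' x h - (t ^ 2 / 2) • f'' h h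
  have hk : ∀ t ∈ Icc (0 : ℝ) 1,
      HasDerivWithinAt k ((f' (x + t • h) - f' x - f'' (t • h)) h) (Icc 0 1) t := by
    intro t ht
    have hline : HasDerivAt (fun t : ℝ => x + t • h) h t := by
      simpa using ((hasDerivAt_id t).smul_const h).const_add x
    have := (((hball _ (hseg t ht)).1.comp_hasDerivAt t hline).sub
      ((hasDerivAt_id t).smul_const (f' x h))).sub
      (((hasDerivAt_pow 2 t).div_const 2).smul_const (f'' h h))
    convert this.hasDerivWithinAt using 1
    · rfl
    · rw [map_smul]
      simp
  have hk' : ∀ t ∈ Ico (0 : ℝ) 1, ‖(f' (x + t • h) - f' x - f'' (t • h)) h‖ ≤ η * ‖h‖ ^ 2 := by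
    intro t ht
    have hb := (hball _ (hseg t (Ico_subset_Icc_self ht))).2
    calc ‖(f' (x + t • h) - f' x - f'' (t • h)) h‖
        ≤ ‖f' (x + t • h) - f' x - f'' (t • h)‖ * ‖h‖ := ContinuousLinearMap.le_opNorm _ _
      _ ≤ η * ‖t • h‖ * ‖h‖ := by gcongr
      _ ≤ η * ‖h‖ * ‖h‖ := by
        gcongr
        rw [norm_smul, Real.norm_of_nonneg ht.1]
        exact mul_le_of_le_one_left (norm_nonneg h) ht.2.le
      _ = η * ‖h‖ ^ 2 := by ring
  rw [norm_pow, norm_norm]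
  convert norm_image_sub_le_of_norm_deriv_le_segment_01' hk hk' using 2
  simp only [k, one_smul, one_pow, zero_smul, add_zero, zero_pow two_ne_zero, zero_div, sub_zero]
  module

section PartialDerivatives

variable {N : ℕ} {u : EuclideanSpace ℝ (Fin N) → ℝ} {x : EuclideanSpace ℝ (Fin N)}

theorem fderiv_apply_eq_sum_pd (v : EuclideanSpace ℝ (Fin N)) :
    fderiv ℝ u x v = ∑ i, v i * pd u i x := by
  conv_lhs => rw [← (EuclideanSpace.basisFun (Fin N) ℝ).sum_repr v]
  simp [pd]

theorem sum_pd_sq_pos (h : fderiv ℝ u x ≠ 0) : 0 < ∑ i, pd u i x ^ 2 := by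
  refine (Finset.sum_nonneg fun i _ => sq_nonneg _).lt_of_ne fun h0 => h ?_
  have hpd : ∀ i, pd u i x = 0 := fun i => by
    simpa using (Finset.sum_eq_zero_iff_of_nonneg fun i _ => sq_nonneg (pd u i x)).1 h0.symm i
  ext v
  simp [fderiv_apply_eq_sum_pd, hpd]

variable (hu : DifferentiableAt ℝ (fderiv ℝ u) x)
include hu

theorem differentiableAt_pd (i : Fin N) : DifferentiableAt ℝ (pd u i) x :=
  hu.clm_apply (differentiableAt_const _)

theorem pd2_eq_fderiv_fderiv (i j : Fin N) :
    pd2 u i j x =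
      fderiv ℝ (fderiv ℝ u) x (EuclideanSpace.single i 1) (EuclideanSpace.single j 1) := by
  change fderiv ℝ (fun y => fderiv ℝ u y (EuclideanSpace.single j 1)) x _ = _
  rw [fderiv_clm_apply hu (differentiableAt_const _)]
  simp

theorem fderiv_fderiv_apply_eq_sum_pd2 (v w : EuclideanSpace ℝ (Fin N)) :
    fderiv ℝ (fderiv ℝ u) x v w = ∑ i, ∑ j, v i * w j * pd2 u i j x := by
  conv_lhs => rw [← (EuclideanSpace.basisFun (Fin N) ℝ).sum_repr v,
    ← (EuclideanSpace.basisFun (Fin N) ℝ).sum_repr w]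
  simp only [EuclideanSpace.basisFun_repr, EuclideanSpace.basisFun_apply, map_sum, map_smul,
    sum_apply, smul_apply, smul_eq_mul, Finset.mul_sum, pd2_eq_fderiv_fderiv hu, mul_assoc]
  rw [Finset.sum_comm]
  exact Finset.sum_congr rfl fun _ _ => Finset.sum_congr rfl fun _ _ => mul_left_comm _ _ _

theorem oneLap_eq_lap_sub_infLap (hg : gradNorm u x ≠ 0) :
    oneLap u x = lap u x - infLap u x := by
  have hp : ∀ i, HasFDerivAt (pd u i) (fderiv ℝ (pd u i) x) x := fun i =>
    (differentiableAt_pd hu i).hasFDerivAt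
  have hS0 : ∑ j, pd u j x ^ 2 ≠ 0 := fun h0 => hg (by simp [gradNorm, h0])
  have hG := (HasFDerivAt.fun_sum (u := Finset.univ) fun j _ => (hp j).pow 2).sqrt hS0
  have hinv := (hasDerivAt_inv hg).comp_hasFDerivAt x hG
  have hterm : ∀ i, pd (fun y => pd u i y / gradNorm u y) i x =
      pd2 u i i x / gradNorm u x
        - pd u i x * (∑ j, pd u j x * pd2 u i j x) / gradNorm u x ^ 3 := fun i => by
    have hfun : (fun y => pd u i y / gradNorm u y) = pd u i * (fun y => y⁻¹) ∘ gradNorm u := by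
      funext y; simp [div_eq_mul_inv]
    rw [pd, hfun, ((hp i).mul hinv).fderiv]
    have hsqrt : √(∑ j, pd u j x ^ 2) = gradNorm u x := rfl
    have hpd2 : ∀ j, fderiv ℝ (pd u j) x (EuclideanSpace.single i 1) = pd2 u i j x := fun _ => rfl
    simp only [add_apply, smul_apply, sum_apply, Function.comp_apply, smul_eq_mul, hsqrt, hpd2,
      nsmul_eq_mul, Nat.cast_ofNat, Nat.add_one_sub_one, pow_one, mul_assoc, ← Finset.mul_sum]
    field_simp
    ring
  rw [oneLap, lap, infLap, Finset.sum_congr rfl fun i _ => hterm i]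
  simp only [Finset.mul_sum, Finset.sum_div, Finset.sum_sub_distrib, mul_sub]
  congr 1 <;> refine Finset.sum_congr rfl fun _ _ => ?_
  · field_simp
  · refine Finset.sum_congr rfl fun _ _ => ?_
    field_simp

end PartialDerivatives

noncomputable def circleDir (θ : ℝ) : EuclideanSpace ℝ (Fin 2) :=
  EuclideanSpace.single 0 (cos θ) + EuclideanSpace.single 1 (sin θ)

theorem circlePt_eq_add_smul (x : EuclideanSpace ℝ (Fin 2)) (ε θ : ℝ) :
    circlePt x ε θ = x + ε • circleDir θ := rfl

@[simp]
theorem circleDir_apply_zero (θ : ℝ) : circleDir θ 0 = cos θ := by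
  simp [circleDir]

@[simp]
theorem circleDir_apply_one (θ : ℝ) : circleDir θ 1 = sin θ := by
  simp [circleDir]

theorem norm_circleDir (θ : ℝ) : ‖circleDir θ‖ = 1 := by
  simp [EuclideanSpace.norm_eq, Fin.sum_univ_two]

/-- `(b²A - abB + a²C) / (a² + b²)` is the quadratic form `A X² + B X Y + C Y²` at the unit
vector `(-b, a) / √(a² + b²)` orthogonal to `(a, b)`. -/
theorem abs_quadratic_sub_perp_le {a b : ℝ} (A B C θ : ℝ) (hab : 0 < a ^ 2 + b ^ 2) :
    |cos θ ^ 2 * A + cos θ * sin θ * B + sin θ ^ 2 * C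
        - (b ^ 2 * A - a * b * B + a ^ 2 * C) / (a ^ 2 + b ^ 2)|
      ≤ (|A - C| + |B|) * (|a| + |b|) / (a ^ 2 + b ^ 2) * |a * cos θ + b * sin θ| := by
  have hlin : ∀ p q : ℝ, |p * cos θ + q * sin θ| ≤ |p| + |q| := fun p q => calc
    _ ≤ |p| * |cos θ| + |q| * |sin θ| := by rw [← abs_mul, ← abs_mul]; exact abs_add_le _ _
    _ ≤ |p| * 1 + |q| * 1 := by gcongr <;> [exact abs_cos_le_one θ; exact abs_sin_le_one θ]
    _ = |p| + |q| := by ring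
  have key : cos θ ^ 2 * A + cos θ * sin θ * B + sin θ ^ 2 * C
      - (b ^ 2 * A - a * b * B + a ^ 2 * C) / (a ^ 2 + b ^ 2)
      = (a * cos θ + b * sin θ) * ((A - C) * (a * cos θ + (-b) * sin θ)
          + B * (b * cos θ + a * sin θ)) / (a ^ 2 + b ^ 2) := by
    field_simp
    linear_combination (b ^ 2 * A - a * b * B + a ^ 2 * C) * sin_sq_add_cos_sq θ
  have hW : |(A - C) * (a * cos θ + (-b) * sin θ) + B * (b * cos θ + a * sin θ)|
      ≤ (|A - C| + |B|) * (|a| + |b|) := calc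
    _ ≤ |A - C| * |a * cos θ + (-b) * sin θ| + |B| * |b * cos θ + a * sin θ| := by
      rw [← abs_mul, ← abs_mul]; exact abs_add_le _ _
    _ ≤ |A - C| * (|a| + |-b|) + |B| * (|b| + |a|) := by gcongr <;> exact hlin _ _
    _ = (|A - C| + |B|) * (|a| + |b|) := by rw [abs_neg]; ring
  rw [key, abs_div, abs_mul, abs_of_pos hab, div_mul_eq_mul_div,
    mul_comm _ |a * cos θ + b * sin θ|]
  gcongr

section Plane

variable {u : EuclideanSpace ℝ (Fin 2) → ℝ} {x : EuclideanSpace ℝ (Fin 2)}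

theorem fderiv_apply_circleDir (θ : ℝ) :
    fderiv ℝ u x (circleDir θ) = pd u 0 x * cos θ + pd u 1 x * sin θ := by
  simp [fderiv_apply_eq_sum_pd, Fin.sum_univ_two, mul_comm]

variable (hu : DifferentiableAt ℝ (fderiv ℝ u) x) (hg : 0 < pd u 0 x ^ 2 + pd u 1 x ^ 2)
include hu hg

theorem oneLap_eq_hessian_perp :
    oneLap u x = (pd u 1 x ^ 2 * pd2 u 0 0 x - pd u 0 x * pd u 1 x * (pd2 u 0 1 x + pd2 u 1 0 x)
      + pd u 0 x ^ 2 * pd2 u 1 1 x) / (pd u 0 x ^ 2 + pd u 1 x ^ 2) := by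
  have hgrad : gradNorm u x ^ 2 = pd u 0 x ^ 2 + pd u 1 x ^ 2 := by
    rw [gradNorm, Fin.sum_univ_two, sq_sqrt hg.le]
  rw [oneLap_eq_lap_sub_infLap hu (pow_ne_zero_iff two_ne_zero |>.1 (hgrad ▸ hg.ne')), infLap,
    hgrad]
  simp only [lap, Fin.sum_univ_two]
  field_simp
  ring

theorem exists_abs_fderiv_fderiv_circleDir_sub_oneLap_le :
    ∃ K, ∀ θ, |fderiv ℝ (fderiv ℝ u) x (circleDir θ) (circleDir θ) - oneLap u x|
      ≤ K * |pd u 0 x * cos θ + pd u 1 x * sin θ| := by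
  refine ⟨_, fun θ => (abs_quadratic_sub_perp_le (pd2 u 0 0 x) (pd2 u 0 1 x + pd2 u 1 0 x)
    (pd2 u 1 1 x) θ hg).trans_eq' ?_⟩
  rw [fderiv_fderiv_apply_eq_sum_pd2 hu, oneLap_eq_hessian_perp hu hg]
  simp only [Fin.sum_univ_two, circleDir_apply_zero, circleDir_apply_one]
  congr 1
  ring

end Plane

theorem eventually_abs_sub_taylor_circlePt_le {φ : EuclideanSpace ℝ (Fin 2) → ℝ}
    {φ' : EuclideanSpace ℝ (Fin 2) → EuclideanSpace ℝ (Fin 2) →L[ℝ] ℝ}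
    {φ'' : EuclideanSpace ℝ (Fin 2) →L[ℝ] EuclideanSpace ℝ (Fin 2) →L[ℝ] ℝ}
    {x : EuclideanSpace ℝ (Fin 2)} (hφ : ∀ᶠ y in 𝓝 x, HasFDerivAt φ (φ' y) y)
    (hφ' : HasFDerivAt φ' φ'' x) {η : ℝ} (hη : 0 < η) :
    ∀ᶠ ε in 𝓝[>] 0, ∀ θ, |φ (circlePt x ε θ) - φ x - ε * φ' x (circleDir θ)
      - ε ^ 2 / 2 * φ'' (circleDir θ) (circleDir θ)| ≤ η * ε ^ 2 := by
  obtain ⟨δ, hδ, hball⟩ :=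
    Metric.eventually_nhds_iff_ball.1 (isLittleO_iff.1 (isLittleO_sub_taylor_two hφ hφ') hη)
  filter_upwards [Ioo_mem_nhdsGT hδ] with ε hε θ
  have hnorm : ‖ε • circleDir θ‖ = ε := by
    rw [norm_smul, norm_circleDir, mul_one, Real.norm_of_nonneg hε.1.le]
  have := hball (ε • circleDir θ) (by rw [mem_ball_zero_iff, hnorm]; exact hε.2)
  rw [hnorm, Real.norm_of_nonneg (sq_nonneg ε)] at this
  refine le_of_eq_of_le ?_ this
  rw [Real.norm_eq_abs, circlePt_eq_add_smul]
  simp only [map_smul, smul_apply, smul_eq_mul]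
  ring_nf

theorem exists_mul_cos_add_mul_sin_eq {a b : ℝ} (hab : 0 < a ^ 2 + b ^ 2) :
    ∃ r > 0, ∃ α, ∀ θ, a * cos θ + b * sin θ = r * cos (θ - α) := by
  set z : ℂ := ⟨a, b⟩
  have hz : z ≠ 0 := by
    rintro hz
    obtain ⟨rfl, rfl⟩ : a = 0 ∧ b = 0 := Complex.ext_iff.1 hz
    norm_num at hab
  refine ⟨‖z‖, norm_pos_iff.2 hz, Complex.arg z, fun θ => ?_⟩
  rw [cos_sub]
  linear_combination (-cos θ) * Complex.norm_mul_cos_arg z - sin θ * Complex.norm_mul_sin_arg z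

theorem volume_setOf_le_cos_sub_lt_pi (α : ℝ) {s : ℝ} (hs : 0 < s) :
    volume {θ ∈ Ico (0 : ℝ) (2 * π) | s ≤ cos (θ - α)} < ENNReal.ofReal π := by
  set A := {θ : ℝ | s ≤ cos (θ - α)}
  have hA : MeasurableSet A := (isClosed_le continuous_const (by fun_prop)).measurableSet
  have hper : ∀ g : AddSubgroup.zmultiples (2 * π), (fun θ => g +ᵥ θ) ⁻¹' A = A := by
    rintro ⟨_, k, rfl⟩
    ext θ
    simp only [A, mem_preimage, mem_ofPred_eq, AddSubgroup.mk_vadd, vadd_eq_add, zsmul_eq_mul]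
    rw [add_comm, add_sub_right_comm, cos_add_int_mul_two_pi]
  have hsub : A ∩ Ioc (α - π) (α - π + 2 * π) ⊆ Icc (α - arccos s) (α + arccos s) := by
    rintro θ ⟨hθ, h1, h2⟩
    have hπ : |θ - α| ≤ π := abs_le.2 ⟨by linarith, by linarith⟩
    have : |θ - α| ≤ arccos s := calc
      |θ - α| = arccos (cos (θ - α)) := by rw [← cos_abs, arccos_cos (abs_nonneg _) hπ]
      _ ≤ arccos s := arccos_le_arccos hθ
    exact ⟨by linarith [neg_abs_le (θ - α)], by linarith [le_abs_self (θ - α)]⟩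
  change volume (Ico 0 (2 * π) ∩ A) < _
  calc volume (Ico 0 (2 * π) ∩ A) = volume (A ∩ Ioc 0 (0 + 2 * π)) := by
        rw [inter_comm, zero_add]
        exact measure_congr ((ae_eq_refl A).inter Ico_ae_eq_Ioc)
    _ = volume (A ∩ Ioc (α - π) (α - π + 2 * π)) :=
        (isAddFundamentalDomain_Ioc two_pi_pos 0).measure_set_eq
          (isAddFundamentalDomain_Ioc two_pi_pos _) hA hper
    _ ≤ volume (Icc (α - arccos s) (α + arccos s)) := measure_mono hsub
    _ < ENNReal.ofReal π := by
        rw [volume_Icc, ENNReal.ofReal_lt_ofReal_iff pi_pos]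
        linarith [arccos_lt_pi_div_two.2 hs]

theorem volume_setOf_le_mul_cos_add_mul_sin_lt_pi {a b s : ℝ} (hab : 0 < a ^ 2 + b ^ 2)
    (hs : 0 < s) :
    volume {θ ∈ Ico (0 : ℝ) (2 * π) | s ≤ a * cos θ + b * sin θ} < ENNReal.ofReal π := by
  obtain ⟨r, hr, α, hrα⟩ := exists_mul_cos_add_mul_sin_eq hab
  simp_rw [hrα, ← div_le_iff₀' hr]
  exact volume_setOf_le_cos_sub_lt_pi α (div_pos hs hr)

theorem mul_add_sq_mul_abs_le {ε K ℓ η : ℝ} (hε : 0 < ε) (hη : 0 ≤ η) (hK : ε * K ≤ 2)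
    (hℓ : ℓ < η * ε / 4) : ε * ℓ + ε ^ 2 / 2 * (K * |ℓ|) ≤ η / 2 * ε ^ 2 := by
  rcases le_or_gt ℓ 0 with hℓ0 | hℓ0
  · rw [abs_of_nonpos hℓ0]
    nlinarith [mul_nonneg hε.le (neg_nonneg.2 hℓ0), sq_nonneg ε]
  · rw [abs_of_pos hℓ0]
    nlinarith [mul_pos hε hℓ0]

namespace IsCircleMedian

variable {u : EuclideanSpace ℝ (Fin 2) → ℝ} {x : EuclideanSpace ℝ (Fin 2)} {ε m : ℝ}

theorem ofReal_pi_le_volume_ge (h : IsCircleMedian u x ε m) :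
    ENNReal.ofReal π ≤ volume {θ ∈ Ico (0 : ℝ) (2 * π) | m ≤ u (circlePt x ε θ)} := by
  have hcover : Ico (0 : ℝ) (2 * π) ⊆ {θ ∈ Ico (0 : ℝ) (2 * π) | m ≤ u (circlePt x ε θ)} ∪
      {θ ∈ Ico (0 : ℝ) (2 * π) | u (circlePt x ε θ) ≤ m} := fun θ hθ =>
    (le_total m (u (circlePt x ε θ))).imp (⟨hθ, ·⟩) (⟨hθ, ·⟩)
  have := (measure_mono (μ := volume) hcover).trans (measure_union_le _ _)
  rw [← h, Real.volume_Ico, sub_zero, ← two_mul, ENNReal.ofReal_mul zero_le_two,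
    ENNReal.ofReal_ofNat] at this
  exact (ENNReal.mul_le_mul_iff_right two_ne_zero ENNReal.ofNat_ne_top).1 this

theorem ofReal_pi_le_volume_le (h : IsCircleMedian u x ε m) :
    ENNReal.ofReal π ≤ volume {θ ∈ Ico (0 : ℝ) (2 * π) | u (circlePt x ε θ) ≤ m} :=
  h ▸ h.ofReal_pi_le_volume_ge

theorem exists_le_apply_and_lt (h : IsCircleMedian u x ε m) {a b s : ℝ}
    (hab : 0 < a ^ 2 + b ^ 2) (hs : 0 < s) :
    ∃ θ, m ≤ u (circlePt x ε θ) ∧ a * cos θ + b * sin θ < s := by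
  by_contra! hcon
  have hsub : {θ ∈ Ico (0 : ℝ) (2 * π) | m ≤ u (circlePt x ε θ)} ⊆
      {θ ∈ Ico (0 : ℝ) (2 * π) | s ≤ a * cos θ + b * sin θ} := fun θ hθ => ⟨hθ.1, hcon θ hθ.2⟩
  exact h.ofReal_pi_le_volume_ge.not_gt
    ((measure_mono hsub).trans_lt (volume_setOf_le_mul_cos_add_mul_sin_lt_pi hab hs))

theorem exists_apply_le_and_lt (h : IsCircleMedian u x ε m) {a b s : ℝ}
    (hab : 0 < a ^ 2 + b ^ 2) (hs : 0 < s) :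
    ∃ θ, u (circlePt x ε θ) ≤ m ∧ -s < a * cos θ + b * sin θ := by
  by_contra! hcon
  have hsub : {θ ∈ Ico (0 : ℝ) (2 * π) | u (circlePt x ε θ) ≤ m} ⊆
      {θ ∈ Ico (0 : ℝ) (2 * π) | s ≤ -a * cos θ + -b * sin θ} := fun θ hθ =>
    ⟨hθ.1, by linarith [hcon θ hθ.2]⟩
  have hab' : 0 < (-a) ^ 2 + (-b) ^ 2 := by simpa using hab
  exact h.ofReal_pi_le_volume_le.not_gt
    ((measure_mono hsub).trans_lt (volume_setOf_le_mul_cos_add_mul_sin_lt_pi hab' hs))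

theorem abs_sub_add_le {a b c K η p : ℝ} {q : ℝ → ℝ} (hmed : IsCircleMedian u x ε m)
    (hab : 0 < a ^ 2 + b ^ 2) (hε : 0 < ε) (hη : 0 < η) (hK : ε * K ≤ 2)
    (hq : ∀ θ, |q θ - c| ≤ K * |a * cos θ + b * sin θ|)
    (hu : ∀ θ, |u (circlePt x ε θ) - p - ε * (a * cos θ + b * sin θ) - ε ^ 2 / 2 * q θ|
      ≤ η / 2 * ε ^ 2) :
    |p - m + ε ^ 2 / 2 * c| ≤ η * ε ^ 2 := by
  have hs : 0 < η * ε / 4 := by positivity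
  obtain ⟨θ₁, hm₁, hℓ₁⟩ := hmed.exists_le_apply_and_lt hab hs
  obtain ⟨θ₂, hm₂, hℓ₂⟩ := hmed.exists_apply_le_and_lt hab hs
  have h₁ := mul_add_sq_mul_abs_le hε hη.le hK hℓ₁
  have h₂ := mul_add_sq_mul_abs_le hε hη.le hK (neg_lt.1 hℓ₂)
  rw [abs_neg] at h₂
  have hε2 : 0 ≤ ε ^ 2 / 2 := by positivity
  have hq₁ := mul_le_mul_of_nonneg_left (abs_le.1 (hq θ₁)).2 hε2
  have hq₂ := mul_le_mul_of_nonneg_left (neg_le.1 (abs_le.1 (hq θ₂)).1) hε2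
  have hu₁ := (abs_le.1 (hu θ₁)).2
  have hu₂ := (abs_le.1 (hu θ₂)).1
  rw [abs_le]
  constructor <;> linarith

end IsCircleMedian

/-- median expansion and the 1-Laplacian in the plane. -/
theorem median_expansion (Ω : Set (EuclideanSpace ℝ (Fin 2))) (hΩ : IsOpen Ω)
    (φ : EuclideanSpace ℝ (Fin 2) → ℝ) (hφ : ContDiffOn ℝ 2 φ Ω)
    (x : EuclideanSpace ℝ (Fin 2)) (hx : x ∈ Ω) (hD : fderiv ℝ φ x ≠ 0)
    (m : ℝ → ℝ) (hm : ∀ᶠ ε in 𝓝[>] (0:ℝ), IsCircleMedian φ x ε (m ε)) :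
    (fun ε : ℝ => φ x - m ε + ε ^ 2 / 2 * oneLap φ x)
      =o[𝓝[>] (0:ℝ)] fun ε => ε ^ 2 := by
  have hdiff : ∀ᶠ y in 𝓝 x, HasFDerivAt φ (fderiv ℝ φ y) y :=
    eventually_of_mem (hΩ.mem_nhds hx) fun y hy =>
      ((hφ.differentiableOn two_ne_zero y hy).differentiableAt (hΩ.mem_nhds hy)).hasFDerivAt
  have hH : DifferentiableAt ℝ (fderiv ℝ φ) x :=
    ((hφ.fderiv_of_isOpen hΩ one_add_one_eq_two.le).differentiableOn one_ne_zero x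
      hx).differentiableAt (hΩ.mem_nhds hx)
  have hab : 0 < pd φ 0 x ^ 2 + pd φ 1 x ^ 2 := by
    simpa [Fin.sum_univ_two] using sum_pd_sq_pos hD
  obtain ⟨K, hK⟩ := exists_abs_fderiv_fderiv_circleDir_sub_oneLap_le hH hab
  have hεK : ∀ᶠ ε in 𝓝[>] (0 : ℝ), ε * K ≤ 2 :=
    (((continuous_mul_const K).tendsto' 0 0 (zero_mul K)).mono_left
      nhdsWithin_le_nhds).eventually (eventually_le_nhds two_pos)
  refine isLittleO_iff.2 fun η hη => ?_
  filter_upwards [eventually_abs_sub_taylor_circlePt_le hdiff hH.hasFDerivAt (half_pos hη), hm,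
    hεK, self_mem_nhdsWithin] with ε hT hmed hεK hε
  simp_rw [fderiv_apply_circleDir] at hT
  rw [Real.norm_eq_abs, Real.norm_of_nonneg (sq_nonneg ε)]
  exact hmed.abs_sub_add_le hab hε hη hεK hK hT
end

section
/- Let 1 < p < 2, u_p(x) = |x|^{(p-2)/(p-1)} on R², x = (x₁, 0) with x₁ > 0, and 0 < ε < x₁. Then the median of u_p over the circle ∂B_ε(x) equals (x₁² + ε²)^{(p-2)/(2(p-1))}. -/
open MeasureTheory Real Filter Asymptotics Metric Set Topology

/-! On `∂B_ε((x₁, 0))` the squared distance to the origin is `x₁² + ε² + 2 x₁ ε cos θ`, and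
`t ↦ t ^ ((p - 2) / (2 (p - 1)))` is strictly decreasing, so `u_p` lies above the proposed median
exactly where `cos θ ≤ 0` and below it exactly where `cos θ ≥ 0`. Both sets of angles in `[0, 2π)`
have length `π`. -/

theorem norm_circlePt_single_zero_sq (a ε θ : ℝ) :
    ‖circlePt (EuclideanSpace.single 0 a) ε θ‖ ^ 2 = a ^ 2 + ε ^ 2 + 2 * a * ε * cos θ := by
  rw [EuclideanSpace.norm_eq, sq_sqrt (by positivity), Fin.sum_univ_two]
  simp only [circlePt, PiLp.add_apply, PiLp.smul_apply, PiLp.single_apply,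
    Real.norm_eq_abs, sq_abs, smul_eq_mul]
  norm_num
  linear_combination ε ^ 2 * sin_sq_add_cos_sq θ

theorem norm_circlePt_single_zero_rpow (a ε θ α : ℝ) :
    ‖circlePt (EuclideanSpace.single 0 a) ε θ‖ ^ α
      = (a ^ 2 + ε ^ 2 + 2 * a * ε * cos θ) ^ (α / 2) := by
  rw [← norm_circlePt_single_zero_sq, ← rpow_natCast, ← rpow_mul (norm_nonneg _)]
  congr 1
  ring

theorem sq_add_sq_add_mul_cos_pos {a ε : ℝ} (hε : 0 < ε) (hεa : ε < a) (θ : ℝ) :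
    0 < a ^ 2 + ε ^ 2 + 2 * a * ε * cos θ := by
  nlinarith [neg_one_le_cos θ, mul_pos (hε.trans hεa) hε, sq_pos_of_pos (sub_pos.2 hεa)]

theorem Real.setOf_cos_nonpos_inter_Ico :
    {θ ∈ Ico 0 (2 * π) | cos θ ≤ 0} = Icc (π / 2) (3 * π / 2) := by
  ext θ
  simp only [mem_Ico, mem_Icc]
  constructor
  · rintro ⟨⟨h0, h2π⟩, hcos⟩
    refine ⟨not_lt.1 fun h => hcos.not_gt (cos_pos_of_mem_Ioo ⟨by linarith, h⟩),
      not_lt.1 fun h => hcos.not_gt ?_⟩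
    rw [← cos_sub_two_pi]
    exact cos_pos_of_mem_Ioo ⟨by linarith, by linarith⟩
  · rintro ⟨h1, h2⟩
    exact ⟨⟨by linarith [pi_pos], by linarith [pi_pos]⟩,
      cos_nonpos_of_pi_div_two_le_of_le h1 (by linarith)⟩

theorem Real.setOf_cos_nonneg_inter_Ico :
    {θ ∈ Ico 0 (2 * π) | 0 ≤ cos θ} = Icc 0 (π / 2) ∪ Ico (3 * π / 2) (2 * π) := by
  ext θ
  simp only [mem_Ico, mem_Icc, mem_union]
  constructor
  · rintro ⟨⟨h0, h2π⟩, hcos⟩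
    rcases le_or_gt θ (π / 2) with h | h
    · exact Or.inl ⟨h0, h⟩
    · exact Or.inr ⟨not_lt.1 fun h' => hcos.not_gt (cos_neg_of_pi_div_two_lt_of_lt h
        (by linarith)), h2π⟩
  · rintro (⟨h0, h1⟩ | ⟨h1, h2π⟩)
    · exact ⟨⟨h0, by linarith [pi_pos]⟩, cos_nonneg_of_mem_Icc ⟨by linarith [pi_pos], h1⟩⟩
    · refine ⟨⟨by linarith [pi_pos], h2π⟩, ?_⟩
      rw [← cos_sub_two_pi]
      exact cos_nonneg_of_mem_Icc ⟨by linarith, by linarith⟩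

theorem Real.volume_cos_nonpos_eq_volume_cos_nonneg :
    volume {θ ∈ Ico 0 (2 * π) | cos θ ≤ 0} = volume {θ ∈ Ico 0 (2 * π) | 0 ≤ cos θ} := by
  have hπ := pi_pos
  have hdisj : Disjoint (Icc 0 (π / 2)) (Ico (3 * π / 2) (2 * π)) :=
    disjoint_left.2 fun θ h h' => by linarith [h.2, h'.1]
  rw [setOf_cos_nonpos_inter_Ico, setOf_cos_nonneg_inter_Ico,
    measure_union hdisj measurableSet_Ico, Real.volume_Icc, Real.volume_Icc, Real.volume_Ico,
    ← ENNReal.ofReal_add (by linarith) (by linarith)]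
  ring_nf

section

variable {a ε α : ℝ}

theorem rpow_le_norm_circlePt_rpow_iff (hε : 0 < ε) (hεa : ε < a) (hα : α < 0) (θ : ℝ) :
    (a ^ 2 + ε ^ 2) ^ (α / 2) ≤ ‖circlePt (EuclideanSpace.single 0 a) ε θ‖ ^ α
      ↔ cos θ ≤ 0 := by
  have ha : 0 < a := hε.trans hεa
  rw [norm_circlePt_single_zero_rpow, rpow_le_rpow_iff_of_neg (by positivity)
    (sq_add_sq_add_mul_cos_pos hε hεa θ) (by linarith), add_le_iff_nonpos_right,
    ← neg_nonneg, ← mul_neg, mul_nonneg_iff_of_pos_left (by positivity), neg_nonneg]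

theorem norm_circlePt_rpow_le_rpow_iff (hε : 0 < ε) (hεa : ε < a) (hα : α < 0) (θ : ℝ) :
    ‖circlePt (EuclideanSpace.single 0 a) ε θ‖ ^ α ≤ (a ^ 2 + ε ^ 2) ^ (α / 2)
      ↔ 0 ≤ cos θ := by
  have ha : 0 < a := hε.trans hεa
  rw [norm_circlePt_single_zero_rpow, rpow_le_rpow_iff_of_neg
    (sq_add_sq_add_mul_cos_pos hε hεa θ) (by positivity) (by linarith), le_add_iff_nonneg_right,
    mul_nonneg_iff_of_pos_left (by positivity)]

end

theorem fundamental_solution_median_general (p : ℝ) (hp1 : 1 < p) (hp2 : p < 2)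
    (x₁ ε : ℝ) (hε : 0 < ε) (hεx : ε < x₁) :
    IsCircleMedian (fun y => ‖y‖ ^ ((p - 2) / (p - 1)))
      (EuclideanSpace.single 0 x₁) ε
      ((x₁ ^ 2 + ε ^ 2) ^ ((p - 2) / (2 * (p - 1)))) := by
  have hα : (p - 2) / (p - 1) < 0 := div_neg_of_neg_of_pos (by linarith) (by linarith)
  have hm : (p - 2) / (2 * (p - 1)) = (p - 2) / (p - 1) / 2 := by rw [div_div, mul_comm]
  simp only [IsCircleMedian, hm, rpow_le_norm_circlePt_rpow_iff hε hεx hα,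
    norm_circlePt_rpow_le_rpow_iff hε hεx hα]
  exact volume_cos_nonpos_eq_volume_cos_nonneg

/-- the median of the fundamental solution over ∂B_ε((x₁,0)). -/
theorem fundamental_solution_median (p : ℝ) (hp1 : 1 < p) (hp2 : p < 2)
    (x₁ ε : ℝ) (hx : 0 < x₁) (hε : 0 < ε) (hεx : ε < x₁) :
    IsCircleMedian (fun y => ‖y‖ ^ ((p - 2) / (p - 1)))
      (EuclideanSpace.single 0 x₁) ε
      ((x₁ ^ 2 + ε ^ 2) ^ ((p - 2) / (2 * (p - 1)))) :=
  fundamental_solution_median_general p hp1 hp2 x₁ ε hε hεx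
end

section
/- There exists no ε₀ > 0 such that for all 0 < ε < ε₀ the equation 1 = (2/3)(1 + ε²)^{-1/2} + (1/6)(1/(1-ε) + 1/(1+ε)) holds; indeed, this equation fails for every ε ∈ (0,1). -/
open MeasureTheory Real Filter Asymptotics Metric Set Topology

lemma key_ineq (ε : ℝ) (h0 : 0 < ε) (h1 : ε < 1) :
    (1:ℝ) < (2/3) * ((1 + ε ^ 2) ^ (-(1/2) : ℝ)) + (1/6) * (1/(1-ε) + 1/(1+ε)) := by
  have hpos : (0:ℝ) < 1 + ε ^ 2 := by positivity
  have hrw : (1 + ε ^ 2) ^ (-(1/2) : ℝ) = (Real.sqrt (1 + ε ^ 2))⁻¹ := by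
    rw [Real.rpow_neg hpos.le, Real.sqrt_eq_rpow]
  set s := Real.sqrt (1 + ε ^ 2) with hs
  have hspos : 0 < s := Real.sqrt_pos.mpr hpos
  have hs2 : s ^ 2 = 1 + ε ^ 2 := Real.sq_sqrt hpos.le
  have h1e : (0:ℝ) < 1 - ε := by linarith
  have h2e : (0:ℝ) < 1 + ε := by linarith
  have hkey : s * (2 - 3 * ε ^ 2) < 2 * (1 - ε ^ 2) := by
    rcases le_or_gt (2 - 3 * ε ^ 2) 0 with hc | hc
    · nlinarith [mul_nonpos_of_nonneg_of_nonpos hspos.le hc]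
    · by_contra hle
      push_neg at hle
      have h2 : (2 * (1 - ε ^ 2)) ^ 2 ≤ (s * (2 - 3 * ε ^ 2)) ^ 2 := by
        apply pow_le_pow_left₀ (by nlinarith) hle 2
      nlinarith [mul_pos (pow_pos h0 4) hc, pow_pos h0 4, hs2]
  rw [hrw]
  rw [div_add_div _ _ (ne_of_gt h1e) (ne_of_gt h2e)]
  have h1e2 : (0:ℝ) < 1 - ε ^ 2 := by nlinarith
  have heq : 2/3 * s⁻¹ + 1/6 * ((1 * (1 + ε) + (1 - ε) * 1) / ((1 - ε) * (1 + ε)))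
      = (2 * (1 - ε ^ 2) + s) / (3 * s * (1 - ε ^ 2)) := by
    field_simp
    ring
  rw [heq, lt_div_iff₀ (by positivity)]
  nlinarith [hkey]

/-- the non-asymptotic median/max-min formula fails for all ε ∈ (0,1). -/
theorem nonasymptotic_formula_fails :
    (∀ ε ∈ Set.Ioo (0:ℝ) 1,
      (1:ℝ) ≠ (2/3) * ((1 + ε ^ 2) ^ (-(1/2) : ℝ)) + (1/6) * (1/(1-ε) + 1/(1+ε))) ∧
    ¬ ∃ ε₀ > (0:ℝ), ∀ ε : ℝ, 0 < ε → ε < ε₀ →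
      (1:ℝ) = (2/3) * ((1 + ε ^ 2) ^ (-(1/2) : ℝ)) + (1/6) * (1/(1-ε) + 1/(1+ε)) := by
  constructor
  · intro ε hε
    exact ne_of_lt (key_ineq ε hε.1 hε.2)
  · rintro ⟨ε₀, hε₀, h⟩
    set ε := min (ε₀ / 2) (1 / 2) with hε
    have h0 : 0 < ε := lt_min (by linarith) (by norm_num)
    have h1 : ε < 1 := lt_of_le_of_lt (min_le_right _ _) (by norm_num)
    have h2 : ε < ε₀ := lt_of_le_of_lt (min_le_left _ _) (by linarith)
    exact ne_of_lt (key_ineq ε h0 h1) (h ε h0 h2)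
end

section
/- As ε → 0⁺, (1/π)∫₀^{2π} ((1 + 2ε cos θ + ε²)/(1 + ε²))^{-3/2} (cos θ + ε) dθ = -ε - (21/8)ε³ + o(ε³). In particular, for all sufficiently small ε > 0, this integral is strictly less than -ε. -/
/-!
With `k = 2ε / (1 + ε²)` the integrand is `(1 + k cos θ)^(-3/2) (cos θ + ε)`. Replacing
`(1 + s)^(-3/2)` by its binomial Taylor polynomial of degree 3 costs `O(s⁴)` uniformly in `θ`,
hence `O(ε⁴)` after integration, and the polynomial part integrates in closed form to
`π (2ε - 3k/2 + 15k²ε/8 - 105k³/64) = π (-ε - 21ε³/8 + O(ε⁵))`.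
-/

open MeasureTheory Real Filter Asymptotics Metric Set Topology

theorem one_add_rpow_sub_sum_choose_isBigO (a : ℝ) (n : ℕ) :
    (fun s : ℝ => (1 + s) ^ a - ∑ k ∈ Finset.range n, Ring.choose a k * s ^ k)
      =O[𝓝 0] fun s => s ^ n := by
  have h := one_add_rpow_hasFPowerSeriesAt_zero (a := a) |>.isBigO_sub_partialSum_pow n
  simp only [FormalMultilinearSeries.partialSum, binomialSeries,
    FormalMultilinearSeries.ofScalars_apply_eq, zero_add, norm_eq_abs, ← abs_pow,
    isBigO_abs_right, smul_eq_mul] at h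
  simpa only [mul_comm] using h

theorem one_add_rpow_neg_three_halves_sub_cubic_isBigO :
    (fun s : ℝ => (1 + s) ^ (-(3/2) : ℝ) - (1 - 3/2 * s + 15/8 * s ^ 2 - 35/16 * s ^ 3))
      =O[𝓝 0] fun s => s ^ 4 := by
  have hcoeff : ∀ s : ℝ, ∑ k ∈ Finset.range 4, Ring.choose (-(3/2) : ℝ) k * s ^ k =
      1 - 3/2 * s + 15/8 * s ^ 2 - 35/16 * s ^ 3 := fun s => by
    simp only [Finset.sum_range_succ, Ring.choose_eq_smul, descPochhammer_succ_right,
      descPochhammer_zero, Polynomial.smeval_sub, Polynomial.smeval_X, Polynomial.smeval_mul,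
      Polynomial.smeval_natCast, Polynomial.smeval_one]
    norm_num
    ring
  simpa only [hcoeff] using one_add_rpow_sub_sum_choose_isBigO (-(3/2)) 4

theorem isBigO_intervalIntegral_comp_mul_cos {R k : ℝ → ℝ} {n : ℕ}
    (hR : R =O[𝓝 0] fun s => s ^ n) (hk : k =O[𝓝 0] id) (a b : ℝ) :
    (fun ε => ∫ θ in a..b, R (k ε * cos θ) * (cos θ + ε)) =O[𝓝 0] fun ε => ε ^ n := by
  have uniform : ∀ s : Set ℝ, (fun p : ℝ × ℝ => R (k p.2 * cos p.1) * (cos p.1 + p.2))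
      =O[𝓟 s ×ˢ 𝓝 0] ((fun ε => ε ^ n) ∘ Prod.snd) := by
    intro s
    have hkc : (fun p : ℝ × ℝ => k p.2 * cos p.1) =O[𝓟 s ×ˢ 𝓝 0] Prod.snd := by
      refine IsBigO.trans (IsBigO.of_bound 1 (Eventually.of_forall fun p => ?_))
        (hk.comp_tendsto tendsto_snd)
      simpa [abs_mul] using mul_le_mul_of_nonneg_left (abs_cos_le_one p.1) (abs_nonneg (k p.2))
    have hRkc := (hR.comp_tendsto (hkc.trans_tendsto tendsto_snd)).trans (hkc.pow n)
    have hbdd : (fun p : ℝ × ℝ => cos p.1 + p.2) =O[𝓟 s ×ˢ 𝓝 0] fun _ => (1 : ℝ) :=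
      (IsBigO.of_bound 1 (Eventually.of_forall fun p => by simpa using abs_cos_le_one p.1)).add
        (tendsto_snd.isBigO_one ℝ)
    exact (hRkc.mul hbdd).congr_right fun p => mul_one _
  exact ((uniform _).set_integral_isBigO measure_Ioc_lt_top).sub
    ((uniform _).set_integral_isBigO measure_Ioc_lt_top)

theorem integral_cubic_comp_mul_cos (k ε : ℝ) :
    ∫ θ in (0 : ℝ)..2 * π,
        (1 - 3/2 * (k * cos θ) + 15/8 * (k * cos θ) ^ 2 - 35/16 * (k * cos θ) ^ 3) * (cos θ + ε) =
      π * (2 * ε - 3/2 * k + 15/8 * k ^ 2 * ε - 105/64 * k ^ 3) := by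
  have hexpand : (fun θ => (1 - 3/2 * (k * cos θ) + 15/8 * (k * cos θ) ^ 2
        - 35/16 * (k * cos θ) ^ 3) * (cos θ + ε)) =
      fun θ => ε + (1 - 3/2 * k * ε) * cos θ + (15/8 * k ^ 2 * ε - 3/2 * k) * cos θ ^ 2
        + (15/8 * k ^ 2 - 35/16 * k ^ 3 * ε) * cos θ ^ 3 - 35/16 * k ^ 3 * cos θ ^ 4 := by
    funext θ
    ring
  rw [hexpand, intervalIntegral.integral_sub, intervalIntegral.integral_add,
    intervalIntegral.integral_add, intervalIntegral.integral_add]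
  · simp only [intervalIntegral.integral_const, sub_zero, smul_eq_mul,
      intervalIntegral.integral_const_mul, integral_cos, sin_two_pi, sin_zero, sub_self, mul_zero,
      add_zero, integral_cos_sq, cos_two_pi, cos_zero, zero_add, ne_eq, OfNat.ofNat_ne_zero,
      not_false_eq_true, mul_div_cancel_left₀, integral_cos_pow_three, zero_pow, zero_div,
      integral_cos_pow, Nat.reduceAdd, one_pow, Nat.cast_ofNat]
    ring
  all_goals exact Continuous.intervalIntegrable (by fun_prop) _ _

theorem integral_one_add_mul_cos_rpow_eq {k : ℝ} (hk : |k| < 1) (ε : ℝ) :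
    ∫ θ in (0 : ℝ)..2 * π, (1 + k * cos θ) ^ (-(3/2) : ℝ) * (cos θ + ε) =
      π * (2 * ε - 3/2 * k + 15/8 * k ^ 2 * ε - 105/64 * k ^ 3) +
        ∫ θ in (0 : ℝ)..2 * π, ((1 + k * cos θ) ^ (-(3/2) : ℝ) - (1 - 3/2 * (k * cos θ)
          + 15/8 * (k * cos θ) ^ 2 - 35/16 * (k * cos θ) ^ 3)) * (cos θ + ε) := by
  have hpos : ∀ θ, 0 < 1 + k * cos θ := fun θ => by
    have : |k * cos θ| < 1 := by
      rw [abs_mul]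
      exact (mul_le_of_le_one_right (abs_nonneg _) (abs_cos_le_one θ)).trans_lt hk
    linarith [neg_abs_le (k * cos θ)]
  have hcont : Continuous fun θ => (1 + k * cos θ) ^ (-(3/2) : ℝ) :=
    (continuous_const.add (continuous_const.mul continuous_cos)).rpow_const
      fun θ => Or.inl (hpos θ).ne'
  rw [← integral_cubic_comp_mul_cos, ← intervalIntegral.integral_add]
  · simp only [← add_mul, add_sub_cancel]
  · exact (Continuous.intervalIntegrable (by fun_prop) _ _)
  · exact ((hcont.sub (by fun_prop)).mul (by fun_prop)).intervalIntegrable _ _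

theorem isBigO_two_mul_div_one_add_sq : (fun ε : ℝ => 2 * ε / (1 + ε ^ 2)) =O[𝓝 0] id := by
  refine IsBigO.of_bound 2 (Eventually.of_forall fun ε => ?_)
  rw [norm_eq_abs, norm_eq_abs, id, abs_div, abs_of_pos (by positivity : (0 : ℝ) < 1 + ε ^ 2),
    abs_mul, abs_two]
  exact div_le_of_le_mul₀ (by positivity) (by positivity) (by nlinarith [abs_nonneg ε, sq_nonneg ε])

theorem cubic_coefficients_sub_expansion_isBigO :
    (fun ε : ℝ => (2 * ε - 3/2 * (2 * ε / (1 + ε ^ 2)) + 15/8 * (2 * ε / (1 + ε ^ 2)) ^ 2 * ε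
        - 105/64 * (2 * ε / (1 + ε ^ 2)) ^ 3) - (-ε - 21/8 * ε ^ 3)) =O[𝓝 0] fun ε => ε ^ 4 := by
  have hclosed : ∀ ε : ℝ, (2 * ε - 3/2 * (2 * ε / (1 + ε ^ 2))
      + 15/8 * (2 * ε / (1 + ε ^ 2)) ^ 2 * ε - 105/64 * (2 * ε / (1 + ε ^ 2)) ^ 3)
      - (-ε - 21/8 * ε ^ 3) =
      ε ^ 4 * (ε * (171 + 87 * ε ^ 2 + 21 * ε ^ 4) / (8 * (1 + ε ^ 2) ^ 3)) := fun ε => by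
    field_simp
    ring
  have hcont : ContinuousAt
      (fun ε : ℝ => ε * (171 + 87 * ε ^ 2 + 21 * ε ^ 4) / (8 * (1 + ε ^ 2) ^ 3)) 0 := by
    fun_prop (disch := positivity)
  simp only [hclosed]
  exact ((isBigO_refl _ _).mul (hcont.tendsto.isBigO_one ℝ)).congr_right fun ε => mul_one _

theorem integral_sub_expansion_isBigO_pow_four :
    (fun ε : ℝ => (1 / π) * (∫ θ in (0:ℝ)..(2 * π),
          (((1 + 2 * ε * cos θ + ε ^ 2) / (1 + ε ^ 2)) ^ (-(3/2) : ℝ)) * (cos θ + ε))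
        - (-ε - (21/8) * ε ^ 3)) =O[𝓝 0] fun ε => ε ^ 4 := by
  have hk := isBigO_two_mul_div_one_add_sq
  have hrem := isBigO_intervalIntegral_comp_mul_cos
    one_add_rpow_neg_three_halves_sub_cubic_isBigO hk 0 (2 * π)
  refine (cubic_coefficients_sub_expansion_isBigO.add (hrem.const_mul_left (1 / π))).congr' ?_
    EventuallyEq.rfl
  filter_upwards [(hk.trans_tendsto tendsto_id).eventually (Ioo_mem_nhds neg_one_lt_zero one_pos)]
    with ε hε
  have hbase : ∀ θ, (1 + 2 * ε * cos θ + ε ^ 2) / (1 + ε ^ 2) = 1 + 2 * ε / (1 + ε ^ 2) * cos θ :=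
    fun θ => by
      field_simp
      ring
  simp only [hbase, integral_one_add_mul_cos_rpow_eq (abs_lt.mpr hε)]
  rw [mul_add, ← mul_assoc, one_div_mul_cancel pi_ne_zero, one_mul]
  ring

/-- asymptotic expansion of the derivative integral, and the strict
inequality for small ε. -/
theorem integral_expansion :
    ((fun ε : ℝ =>
        (1 / Real.pi) * (∫ θ in (0:ℝ)..(2 * Real.pi),
          (((1 + 2 * ε * Real.cos θ + ε ^ 2) / (1 + ε ^ 2)) ^ (-(3/2) : ℝ)) *
            (Real.cos θ + ε))
        - (-ε - (21/8) * ε ^ 3))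
      =o[𝓝[>] (0:ℝ)] fun ε => ε ^ 3) ∧
    ∀ᶠ ε in 𝓝[>] (0:ℝ),
      (1 / Real.pi) * (∫ θ in (0:ℝ)..(2 * Real.pi),
        (((1 + 2 * ε * Real.cos θ + ε ^ 2) / (1 + ε ^ 2)) ^ (-(3/2) : ℝ)) *
          (Real.cos θ + ε)) < -ε := by
  have hlittle := (integral_sub_expansion_isBigO_pow_four.trans_isLittleO
    (isLittleO_pow_pow (by norm_num : 3 < 4))).mono (nhdsWithin_le_nhds (s := Ioi 0))
  refine ⟨hlittle, ?_⟩
  filter_upwards [hlittle.bound one_pos, self_mem_nhdsWithin] with ε hbound (hε : 0 < ε)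
  rw [one_mul, norm_of_nonneg (pow_pos hε 3).le] at hbound
  linarith [(le_norm_self _).trans hbound, pow_pos hε 3]
end

section
/- There exists a point x ∈ R² \ {0} and ε₀ > 0 such that the function u(y) = |y|^{-1}, which is 3/2-harmonic on R² \ {0}, fails to satisfy the exact (non-asymptotic) identity u(x) = (2/p - 1)·med_{∂B_ε(x)} u + (2 - 2/p)·(average of u over ∂B_ε(x)) with p = 3/2 for some ε ∈ (0, ε₀); in fact the identity fails for a sequence of ε tending to 0. -/
open MeasureTheory Real Filter Asymptotics Metric Set Topology

/-!
At `x = e₁` the squared distance from the origin to `x + ε(cos θ, sin θ)` is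
`1 + 2ε cos θ + ε²`, so `u ≤ m` only on an arc around `θ = 0`. For `m ≤ 1 - ε²/2` that arc is
shorter than `π`, whereas the sublevel set of a median has length at least `π`; hence every
median exceeds `1 - ε²/2`. Integrating the degree-five Taylor lower bound of `(1 + t)^(-1/2)`
gives a circle average of `1 + ε²/4 + 9ε⁴/64 + O(ε⁶)`. In `median/3 + 2·average/3` the `ε²`
terms cancel and the positive `ε⁴` term of the average pushes the right-hand side above `u(x) = 1`.
-/

lemma norm_circlePt_single_sq (ε θ : ℝ) :
    ‖circlePt (EuclideanSpace.single 0 1) ε θ‖ ^ 2 = 1 + 2 * ε * cos θ + ε ^ 2 := by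
  rw [EuclideanSpace.norm_sq_eq, Fin.sum_univ_two]
  simp only [circlePt, PiLp.add_apply, PiLp.smul_apply, PiLp.single_apply,
    Real.norm_eq_abs, sq_abs, smul_eq_mul]
  norm_num
  linear_combination ε ^ 2 * sin_sq_add_cos_sq θ

noncomputable def taylorInvSqrtOneAdd (t : ℝ) : ℝ :=
  1 - t / 2 + 3 / 8 * t ^ 2 - 5 / 16 * t ^ 3 + 35 / 128 * t ^ 4 - 63 / 256 * t ^ 5

lemma taylorInvSqrtOneAdd_le {t : ℝ} (ht : -1 < t) : taylorInvSqrtOneAdd t ≤ (√(1 + t))⁻¹ := by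
  have hs : 0 < √(1 + t) := sqrt_pos.mpr (by linarith)
  have hst : t = √(1 + t) ^ 2 - 1 := by rw [sq_sqrt (by linarith)]; ring
  set s := √(1 + t)
  rw [taylorInvSqrtOneAdd, ← one_div, le_div_iff₀ hs, hst]
  -- in terms of `s = √(1 + t)` the difference is `(s - 1) ^ 6` times a positive polynomial
  have hR : 0 ≤ (s - 1) ^ 6 *
      (1 + 843 / 256 * s + 609 / 128 * s ^ 2 + 469 / 128 * s ^ 3 + 189 / 128 * s ^ 4 +
        63 / 256 * s ^ 5) := by
    positivity
  nlinarith [hR]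

lemma integral_quintic_cos (d₀ d₁ d₂ d₃ d₄ d₅ : ℝ) :
    ∫ θ in (0:ℝ)..2 * π, (d₀ + d₁ * cos θ + d₂ * cos θ ^ 2 + d₃ * cos θ ^ 3 +
        d₄ * cos θ ^ 4 + d₅ * cos θ ^ 5) = 2 * π * d₀ + π * d₂ + 3 / 4 * π * d₄ := by
  rw [intervalIntegral.integral_add, intervalIntegral.integral_add, intervalIntegral.integral_add,
    intervalIntegral.integral_add, intervalIntegral.integral_add]
  · simp [integral_cos_pow (n := 2), integral_cos_pow (n := 3)]
    ring
  all_goals exact Continuous.intervalIntegrable (by fun_prop) _ _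

lemma integral_taylorInvSqrtOneAdd_two_mul_cos_add_sq (ε : ℝ) :
    ∫ θ in (0:ℝ)..2 * π, taylorInvSqrtOneAdd (2 * ε * cos θ + ε ^ 2) =
      2 * π * (1 + ε^2/4 + 9/64*ε^4 - 565/128*ε^6 - 595/128*ε^8 - 63/256*ε^10) := by
  have hexpand : ∀ θ, taylorInvSqrtOneAdd (2 * ε * cos θ + ε ^ 2) =
      (1 - ε^2/2 + 3/8*ε^4 - 5/16*ε^6 + 35/128*ε^8 - 63/256*ε^10)
      + (-ε + 3/2*ε^3 - 15/8*ε^5 + 35/16*ε^7 - 315/128*ε^9) * cos θ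
      + (3/2*ε^2 - 15/4*ε^4 + 105/16*ε^6 - 315/32*ε^8) * cos θ ^ 2
      + (-5/2*ε^3 + 35/4*ε^5 - 315/16*ε^7) * cos θ ^ 3
      + (35/8*ε^4 - 315/16*ε^6) * cos θ ^ 4
      + (-63/8*ε^5) * cos θ ^ 5 := fun θ => by
    rw [taylorInvSqrtOneAdd]; ring
  simp only [hexpand, integral_quintic_cos]
  ring

lemma one_add_sq_div_four_lt_circleAvg_inv_norm {ε : ℝ} (hε₀ : 0 < ε) (hε₁ : ε ≤ 1 / 10) :
    1 + ε ^ 2 / 4 < circleAvg (fun y => ‖y‖⁻¹) (EuclideanSpace.single 0 1) ε := by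
  have ht : ∀ θ, -1 < 2 * ε * cos θ + ε ^ 2 := fun θ => by nlinarith [neg_one_le_cos θ]
  have hu : ∀ θ, ‖circlePt (EuclideanSpace.single 0 1) ε θ‖⁻¹ =
      (√(1 + (2 * ε * cos θ + ε ^ 2)))⁻¹ := fun θ => by
    rw [← add_assoc, ← norm_circlePt_single_sq, sqrt_sq (norm_nonneg _)]
  have hmono : ∫ θ in (0:ℝ)..2 * π, taylorInvSqrtOneAdd (2 * ε * cos θ + ε ^ 2) ≤
      ∫ θ in (0:ℝ)..2 * π, (√(1 + (2 * ε * cos θ + ε ^ 2)))⁻¹ :=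
    intervalIntegral.integral_mono_on (by positivity)
      (Continuous.intervalIntegrable (by unfold taylorInvSqrtOneAdd; fun_prop) _ _)
      (Continuous.intervalIntegrable ((by fun_prop : Continuous fun θ =>
        √(1 + (2 * ε * cos θ + ε ^ 2))).inv₀ fun θ => (sqrt_pos.mpr (by linarith [ht θ])).ne') _ _)
      (fun θ _ => taylorInvSqrtOneAdd_le (ht θ))
  have hε₂ : ε ^ 2 ≤ 1 / 100 := by nlinarith
  have hpos : 0 < ε ^ 4 * (9/64 - 565/128*ε^2 - 595/128*ε^4 - 63/256*ε^6) := by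
    have : 0 < 9/64 - 565/128*ε^2 - 595/128*ε^4 - 63/256*ε^6 := by
      nlinarith [mul_le_mul_of_nonneg_left hε₂ (sq_nonneg ε),
        mul_le_mul_of_nonneg_left hε₂ (pow_nonneg (sq_nonneg ε) 2)]
    positivity
  rw [integral_taylorInvSqrtOneAdd_two_mul_cos_add_sq] at hmono
  unfold circleAvg
  simp only [hu]
  rw [lt_inv_mul_iff₀ (by positivity)]
  nlinarith [pi_pos]

lemma IsCircleMedian.pi_le_volume_le {u : EuclideanSpace ℝ (Fin 2) → ℝ}
    {x : EuclideanSpace ℝ (Fin 2)} {ε m : ℝ} (h : IsCircleMedian u x ε m) :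
    ENNReal.ofReal π ≤ volume {θ ∈ Ico (0:ℝ) (2 * π) | u (circlePt x ε θ) ≤ m} := by
  have hcover : Ico (0:ℝ) (2 * π) ⊆ {θ ∈ Ico (0:ℝ) (2 * π) | m ≤ u (circlePt x ε θ)} ∪
      {θ ∈ Ico (0:ℝ) (2 * π) | u (circlePt x ε θ) ≤ m} := fun θ hθ =>
    (le_total m _).imp (⟨hθ, ·⟩) (⟨hθ, ·⟩)
  have h2 := (measure_mono (μ := volume) hcover).trans (measure_union_le _ _)
  rw [h, Real.volume_Ico, sub_zero, ← two_mul, ENNReal.ofReal_mul zero_le_two,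
    ENNReal.ofReal_ofNat] at h2
  exact (ENNReal.mul_le_mul_iff_right two_ne_zero ENNReal.ofNat_ne_top).mp h2

lemma volume_setOf_le_cos_lt_pi {c : ℝ} (hc : 0 < c) :
    volume {θ ∈ Ico (0:ℝ) (2 * π) | c ≤ cos θ} < ENNReal.ofReal π := by
  set a := arccos c
  have hsub : {θ ∈ Ico (0:ℝ) (2 * π) | c ≤ cos θ} ⊆ Icc 0 a ∪ Icc (2 * π - a) (2 * π) := by
    rintro θ ⟨⟨h0, h2π⟩, hcos⟩
    rcases le_total θ π with hθ | hθ
    · exact .inl ⟨h0, arccos_cos h0 hθ ▸ arccos_le_arccos hcos⟩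
    · have := arccos_cos (x := 2 * π - θ) (by linarith) (by linarith) ▸
        arccos_le_arccos ((cos_two_pi_sub θ).symm ▸ hcos)
      exact .inr ⟨by linarith, h2π.le⟩
  have ha : a < π / 2 := arccos_lt_pi_div_two.mpr hc
  calc volume {θ ∈ Ico (0:ℝ) (2 * π) | c ≤ cos θ}
      ≤ volume (Icc 0 a) + volume (Icc (2 * π - a) (2 * π)) :=
        (measure_mono hsub).trans (measure_union_le _ _)
    _ = ENNReal.ofReal (a + a) := by
        rw [Real.volume_Icc, Real.volume_Icc, ← ENNReal.ofReal_add (by linarith [arccos_nonneg c])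
          (by linarith [arccos_nonneg c])]
        ring_nf
    _ < ENNReal.ofReal π := (ENNReal.ofReal_lt_ofReal_iff pi_pos).mpr (by linarith)

lemma div_le_cos_of_inv_norm_circlePt_single_le {ε m θ : ℝ} (hε₀ : 0 < ε) (hε₁ : ε < 1)
    (hm : 0 < m) (h : ‖circlePt (EuclideanSpace.single 0 1) ε θ‖⁻¹ ≤ m) :
    (m⁻¹ ^ 2 - 1 - ε ^ 2) / (2 * ε) ≤ cos θ := by
  have hsq := norm_circlePt_single_sq ε θ
  have hpos : 0 < ‖circlePt (EuclideanSpace.single 0 1) ε θ‖ := by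
    refine lt_of_pow_lt_pow_left₀ 2 (norm_nonneg _) ?_
    rw [hsq]
    nlinarith [neg_one_le_cos θ]
  have hle : m⁻¹ ^ 2 ≤ 1 + 2 * ε * cos θ + ε ^ 2 :=
    hsq ▸ pow_le_pow_left₀ (by positivity) ((inv_le_comm₀ hpos hm).mp h) 2
  rw [div_le_iff₀ (by positivity)]
  linarith

lemma lt_of_isCircleMedian_inv_norm {ε m₁ m : ℝ} (hε₀ : 0 < ε) (hε₁ : ε < 1) (hm₁ : 0 < m₁)
    (hm₁ε : m₁ ^ 2 * (1 + ε ^ 2) < 1)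
    (hm : IsCircleMedian (fun y => ‖y‖⁻¹) (EuclideanSpace.single 0 1) ε m) : m₁ < m := by
  by_contra! hle
  have hc : 0 < (m₁⁻¹ ^ 2 - 1 - ε ^ 2) / (2 * ε) := by
    have : 1 + ε ^ 2 < m₁⁻¹ ^ 2 := by
      rw [inv_pow, ← one_div, lt_div_iff₀ (by positivity)]
      linarith
    exact div_pos (by linarith) (by positivity)
  have hsub : {θ ∈ Ico (0:ℝ) (2 * π) | ‖circlePt (EuclideanSpace.single 0 1) ε θ‖⁻¹ ≤ m} ⊆
      {θ ∈ Ico (0:ℝ) (2 * π) | (m₁⁻¹ ^ 2 - 1 - ε ^ 2) / (2 * ε) ≤ cos θ} :=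
    fun θ ⟨hθ, hθm⟩ => ⟨hθ, div_le_cos_of_inv_norm_circlePt_single_le hε₀ hε₁ hm₁ (hθm.trans hle)⟩
  exact (hm.pi_le_volume_le.trans (measure_mono hsub)).not_gt (volume_setOf_le_cos_lt_pi hc)

/-- the exact median/mean identity fails for the 3/2-harmonic function
|y|⁻¹ along a sequence of radii tending to 0. -/
theorem exact_median_mean_identity_fails :
    ∃ x : EuclideanSpace ℝ (Fin 2), x ≠ 0 ∧
      ∃ εn : ℕ → ℝ, (∀ n, 0 < εn n) ∧ Filter.Tendsto εn Filter.atTop (𝓝 0) ∧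
        ∀ n, ∀ m : ℝ, IsCircleMedian (fun y => ‖y‖⁻¹) x (εn n) m →
          ‖x‖⁻¹ ≠ (2 / (3/2 : ℝ) - 1) * m +
            (2 - 2 / (3/2 : ℝ)) * circleAvg (fun y => ‖y‖⁻¹) x (εn n) := by
  refine ⟨EuclideanSpace.single 0 1, by simp, fun n => ((n : ℝ) + 10)⁻¹, fun n => by positivity,
    tendsto_inv_atTop_zero.comp (tendsto_atTop_add_const_right _ 10 tendsto_natCast_atTop_atTop),
    fun n m hm => ?_⟩
  set ε := ((n : ℝ) + 10)⁻¹
  have hε₀ : 0 < ε := by positivity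
  have hε₁ : ε ≤ 1 / 10 := by
    rw [one_div]
    exact inv_anti₀ (by norm_num) (by linarith [n.cast_nonneg (α := ℝ)])
  have hmed : 1 - ε ^ 2 / 2 < m :=
    lt_of_isCircleMedian_inv_norm hε₀ (by linarith) (by nlinarith)
      (by nlinarith [mul_pos (pow_pos hε₀ 4) (show 0 < 3 - ε ^ 2 by nlinarith)]) hm
  have havg := one_add_sq_div_four_lt_circleAvg_inv_norm hε₀ hε₁
  rw [PiLp.norm_single, norm_one, inv_one]
  norm_num
  intro h
  linarith
end

section
/- Let u(y) = |y|^{-1} on R² \ {0} and x = (1,0), 0 < ε < 1. The mean of u over ∂B_ε(x) equals (1/(2π))∫₀^{2π} (1 + 2ε cos θ + ε²)^{-1/2} dθ, and this mean is strictly greater than the median (1+ε²)^{-1/2} for all sufficiently small ε > 0. -/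
open MeasureTheory Real Filter Asymptotics Metric Set Topology

lemma rpow_neg_half (x : ℝ) (hx : 0 ≤ x) : x ^ (-(1/2):ℝ) = (Real.sqrt x)⁻¹ := by
  rw [Real.sqrt_eq_rpow, ← Real.rpow_neg hx]

lemma key (a b : ℝ) (hpb : 0 < a + b) (hmb : 0 < a - b) :
    (2 * a ^ (-(1/2):ℝ) ≤ (a+b) ^ (-(1/2):ℝ) + (a-b) ^ (-(1/2):ℝ)) ∧
    (b ≠ 0 → 2 * a ^ (-(1/2):ℝ) < (a+b) ^ (-(1/2):ℝ) + (a-b) ^ (-(1/2):ℝ)) := by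
  have h0 : (0:ℝ) < a := by linarith
  set r := Real.sqrt a with hrdef
  set s := Real.sqrt (a+b) with hsdef
  set t := Real.sqrt (a-b) with htdef
  have hr : 0 < r := Real.sqrt_pos.2 h0
  have hs : 0 < s := Real.sqrt_pos.2 hpb
  have ht : 0 < t := Real.sqrt_pos.2 hmb
  have hr2 : r^2 = a := Real.sq_sqrt h0.le
  have hs2 : s^2 = a + b := Real.sq_sqrt hpb.le
  have ht2 : t^2 = a - b := Real.sq_sqrt hmb.le
  rw [rpow_neg_half _ h0.le, rpow_neg_half _ hpb.le, rpow_neg_half _ hmb.le,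
    ← hrdef, ← hsdef, ← htdef]
  have hq : s*t ≤ r^2 := by
    have h : (s*t)^2 ≤ (r^2)^2 := by nlinarith [sq_nonneg b]
    exact le_of_pow_le_pow_left₀ two_ne_zero (by positivity) h
  constructor
  · have h1 : (2*(s*t))^2 ≤ (r*(s+t))^2 := by
      nlinarith [mul_nonneg (sub_nonneg.2 hq) (by positivity : (0:ℝ) ≤ r^2 + 2*(s*t))]
    have h2 := le_of_pow_le_pow_left₀ two_ne_zero (by positivity : (0:ℝ) ≤ r*(s+t)) h1
    rw [inv_eq_one_div r, inv_eq_one_div s, inv_eq_one_div t,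
      div_add_div _ _ hs.ne' ht.ne', mul_one_div, div_le_div_iff₀ hr (mul_pos hs ht)]
    nlinarith [h2]
  · intro hb
    have hq' : s*t < r^2 := by
      have h : (s*t)^2 < (r^2)^2 := by nlinarith [sq_nonneg b, sq_pos_of_ne_zero hb]
      exact lt_of_pow_lt_pow_left₀ 2 (by positivity) h
    have h1 : (2*(s*t))^2 < (r*(s+t))^2 := by
      nlinarith [mul_pos (sub_pos.2 hq') (by positivity : (0:ℝ) < r^2 + 2*(s*t))]
    have h2 : 2*(s*t) < r*(s+t) := lt_of_pow_lt_pow_left₀ 2 (by positivity) h1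
    rw [inv_eq_one_div r, inv_eq_one_div s, inv_eq_one_div t,
      div_add_div _ _ hs.ne' ht.ne', mul_one_div, div_lt_div_iff₀ hr (mul_pos hs ht)]
    nlinarith [h2]

lemma base_pos {ε : ℝ} (hε0 : 0 < ε) (hε1 : ε < 1) (θ : ℝ) :
    0 < 1 + 2 * ε * Real.cos θ + ε ^ 2 := by
  nlinarith [Real.neg_one_le_cos θ, sq_nonneg (1 - ε)]

lemma norm_circlePt {ε : ℝ} (hε0 : 0 < ε) (hε1 : ε < 1) (θ : ℝ) :
    ‖circlePt (EuclideanSpace.single 0 1) ε θ‖⁻¹ =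
      (1 + 2 * ε * Real.cos θ + ε ^ 2) ^ (-(1/2):ℝ) := by
  have hpos := base_pos hε0 hε1 θ
  have hnorm : ‖circlePt (EuclideanSpace.single 0 1) ε θ‖ =
      Real.sqrt (1 + 2 * ε * Real.cos θ + ε ^ 2) := by
    rw [EuclideanSpace.norm_eq]
    congr 1
    rw [Fin.sum_univ_two]
    simp only [circlePt, PiLp.add_apply, PiLp.smul_apply, EuclideanSpace.single_apply,
      Real.norm_eq_abs, sq_abs, smul_eq_mul]
    norm_num
    nlinarith [Real.sin_sq_add_cos_sq θ]
  rw [hnorm, rpow_neg_half _ hpos.le]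

lemma avg_eq {ε : ℝ} (hε0 : 0 < ε) (hε1 : ε < 1) :
    circleAvg (fun y => ‖y‖⁻¹) (EuclideanSpace.single 0 1) ε =
      (2 * Real.pi)⁻¹ * ∫ θ in (0:ℝ)..(2 * Real.pi),
        (1 + 2 * ε * Real.cos θ + ε ^ 2) ^ (-(1/2) : ℝ) := by
  unfold circleAvg
  congr 1
  apply intervalIntegral.integral_congr
  intro θ _
  exact norm_circlePt hε0 hε1 θ

lemma mean_gt {ε : ℝ} (hε0 : 0 < ε) (hε1 : ε < 1) :
    ((1 : ℝ) + ε ^ 2) ^ (-(1/2) : ℝ) <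
      circleAvg (fun y => ‖y‖⁻¹) (EuclideanSpace.single 0 1) ε := by
  rw [avg_eq hε0 hε1]
  set F : ℝ → ℝ := fun θ => (1 + 2 * ε * Real.cos θ + ε ^ 2) ^ (-(1/2):ℝ) with hF
  set m : ℝ := ((1:ℝ) + ε ^ 2) ^ (-(1/2):ℝ) with hm
  have hFcont : Continuous F := by
    apply Continuous.rpow_const
    · continuity
    · intro x; exact Or.inl (base_pos hε0 hε1 x).ne'
  have hint : ∀ a b : ℝ, IntervalIntegrable F volume a b := fun a b =>
    hFcont.intervalIntegrable a b
  have hint' : ∀ a b : ℝ, IntervalIntegrable (fun θ => F (θ + π)) volume a b := fun a b =>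
    (hFcont.comp (continuous_id.add continuous_const)).intervalIntegrable a b
  have h2 : (∫ θ in (0:ℝ)..π, F (θ + π)) = ∫ θ in π..(2*π), F θ := by
    rw [intervalIntegral.integral_comp_add_right]
    norm_num [two_mul]
  have hsplit : (∫ θ in (0:ℝ)..(2*π), F θ) =
      ∫ θ in (0:ℝ)..π, (F θ + F (θ + π)) := by
    rw [intervalIntegral.integral_add (hint 0 π) (hint' 0 π), h2,
      intervalIntegral.integral_add_adjacent_intervals (hint 0 π) (hint π (2*π))]
  have hle : ∀ θ ∈ Set.Ioc (0:ℝ) π, 2 * m ≤ F θ + F (θ + π) := by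
    intro θ _
    have hk := key (1 + ε^2) (2 * ε * Real.cos θ)
      (by have := base_pos hε0 hε1 θ; linarith)
      (by have := base_pos hε0 hε1 (θ + π); rw [Real.cos_add_pi] at this; linarith)
    have e1 : F θ = (1 + ε^2 + 2 * ε * Real.cos θ) ^ (-(1/2):ℝ) := by
      rw [hF]; ring_nf
    have e2 : F (θ + π) = (1 + ε^2 - 2 * ε * Real.cos θ) ^ (-(1/2):ℝ) := by
      rw [hF]; simp only [Real.cos_add_pi]; ring_nf
    rw [e1, e2, hm]; exact hk.1
  have hltpt : 2 * m < F 0 + F (0 + π) := by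
    have hk := key (1 + ε^2) (2 * ε * Real.cos 0)
      (by have := base_pos hε0 hε1 0; linarith)
      (by have := base_pos hε0 hε1 (0 + π); rw [Real.cos_add_pi] at this; linarith)
    have e1 : F 0 = (1 + ε^2 + 2 * ε * Real.cos 0) ^ (-(1/2):ℝ) := by
      rw [hF]; ring_nf
    have e2 : F (0 + π) = (1 + ε^2 - 2 * ε * Real.cos 0) ^ (-(1/2):ℝ) := by
      rw [hF]; simp only [Real.cos_add_pi]; ring_nf
    rw [e1, e2, hm]
    exact hk.2 (by simp [Real.cos_zero]; positivity)
  have hstrict : (∫ _ in (0:ℝ)..π, 2 * m) < ∫ θ in (0:ℝ)..π, (F θ + F (θ + π)) := by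
    apply intervalIntegral.integral_lt_integral_of_continuousOn_of_le_of_exists_lt Real.pi_pos
      continuousOn_const
      ((hFcont.add (hFcont.comp (continuous_id.add continuous_const))).continuousOn)
      hle
    exact ⟨0, ⟨le_refl 0, Real.pi_pos.le⟩, hltpt⟩
  have hconst : (∫ _ in (0:ℝ)..π, 2 * m) = 2 * π * m := by
    rw [intervalIntegral.integral_const]; simp [smul_eq_mul]; ring
  have hI : 2 * π * m < ∫ θ in (0:ℝ)..(2*π), F θ := by
    rw [hsplit, ← hconst]; exact hstrict
  have h2pi : (0:ℝ) < 2 * π := by positivity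
  calc m = (2*π)⁻¹ * (2 * π * m) := by field_simp
    _ < (2*π)⁻¹ * ∫ θ in (0:ℝ)..(2*π), F θ := by
        exact mul_lt_mul_of_pos_left hI (by positivity)

/-- the circle mean of |y|⁻¹ about (1,0), and mean > median for small ε. -/
theorem mean_gt_median :
    (∀ ε ∈ Set.Ioo (0:ℝ) 1,
      circleAvg (fun y => ‖y‖⁻¹) (EuclideanSpace.single 0 1) ε =
        (2 * Real.pi)⁻¹ * ∫ θ in (0:ℝ)..(2 * Real.pi),
          (1 + 2 * ε * Real.cos θ + ε ^ 2) ^ (-(1/2) : ℝ)) ∧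
    ∀ᶠ ε in 𝓝[>] (0:ℝ),
      ((1 : ℝ) + ε ^ 2) ^ (-(1/2) : ℝ) <
        circleAvg (fun y => ‖y‖⁻¹) (EuclideanSpace.single 0 1) ε := by
  constructor
  · intro ε hε
    exact avg_eq hε.1 hε.2
  · filter_upwards [Ioo_mem_nhdsGT_of_mem (Set.left_mem_Ico.2 zero_lt_one)] with ε hε
    exact mean_gt hε.1 hε.2
end
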